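/- arXiv:2204.10507 — 10 statements merged into one kernel-verified Lean document; each statement's English description precedes it below -/
import Mathlib

section
/- If A is a ring such that the factor ring A/J(A) is commutative (where J(A) is the Jacobson radical), then every maximal right ideal of A is a two-sided ideal. -/
/-- A ring is *centrally essential* if its center is an essential submodule over the
center, i.e. every nonzero element has a nonzero central multiple by a central element. -/
def IsCentrallyEssential (A : Type*) [Ring A] : Prop :=
  ∀ a : A, a ≠ 0 → ∃ z ∈ Set.center A, a * z ≠ 0 ∧ a * z ∈ Set.center A

/-- A right ideal (submodule of `A` as a right module over itself) is a two-sided ideal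
if it is closed under left multiplication. -/
def IsTwoSidedRightIdeal {A : Type*} [Ring A] (I : Submodule Aᵐᵒᵖ A) : Prop :=
  ∀ a x : A, x ∈ I → a * x ∈ I

/-- A ring is right quasi-invariant if every maximal right ideal is two-sided. -/
def IsRightQuasiInvariant (A : Type*) [Ring A] : Prop :=
  ∀ M : Submodule Aᵐᵒᵖ A, IsCoatom M → IsTwoSidedRightIdeal M

/-!
The Jacobson radical `J` is defined through maximal *left* ideals, but it is a two-sided ideal
and `1 - u` is a unit for every `u ∈ J`. Hence `J` also lies in every maximal right ideal `M`:
otherwise `1 = m + j c` with `m ∈ M`, `j ∈ J`, and `m = 1 - j c` would be a unit in `M`.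
Commutativity of `A/J` puts `a x - x a` in `J ⊆ M`, and `x a ∈ M` whenever `x ∈ M`,
so `a x ∈ M`.
-/

namespace Ring

variable {A : Type*} [Ring A]

theorem exists_mul_one_sub_eq_one_of_mem_jacobson {u : A} (hu : u ∈ jacobson A) :
    ∃ v, v * (1 - u) = 1 := by
  rw [← Ideal.jacobson_bot] at hu
  obtain ⟨z, hz⟩ := Ideal.mem_jacobson_iff.1 hu (-1)
  refine ⟨z, ?_⟩
  rw [Submodule.mem_bot, sub_eq_zero] at hz
  calc z * (1 - u) = z * -1 * u + z := by noncomm_ring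
    _ = 1 := hz

theorem isUnit_one_sub_of_mem_jacobson {u : A} (hu : u ∈ jacobson A) : IsUnit (1 - u) := by
  obtain ⟨v, hv⟩ := exists_mul_one_sub_eq_one_of_mem_jacobson hu
  -- `v = 1 + v u` is itself of the form `1 - (element of J)`, so it has a left inverse too.
  have hv_eq : v = 1 - -(v * u) := by rw [sub_neg_eq_add, ← hv]; noncomm_ring
  obtain ⟨w, hw⟩ := exists_mul_one_sub_eq_one_of_mem_jacobson
    (neg_mem (Ideal.mul_mem_left _ v hu))
  rw [← hv_eq] at hw
  have hw_eq : w = 1 - u := left_inv_eq_right_inv hw hv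
  exact ⟨⟨1 - u, v, hw_eq ▸ hw, hv⟩, rfl⟩

end Ring

namespace Submodule

variable {A : Type*} [Ring A]

theorem eq_top_of_isUnit_mem_of_mulOpposite {M : Submodule Aᵐᵒᵖ A} {u : A} (hu : u ∈ M)
    (hunit : IsUnit u) : M = ⊤ := by
  obtain ⟨u, rfl⟩ := hunit
  have h1 : (1 : A) ∈ M := by
    simpa using M.smul_mem (MulOpposite.op ↑u⁻¹) hu
  rw [eq_top_iff]
  intro y _
  simpa using M.smul_mem (MulOpposite.op y) h1

theorem jacobson_le_of_isCoatom {M : Submodule Aᵐᵒᵖ A} (hM : IsCoatom M) :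
    (Ring.jacobson A : Set A) ⊆ M := by
  intro j hj
  by_contra hjM
  have hsup : M ⊔ span Aᵐᵒᵖ {j} = ⊤ :=
    hM.2 _ (left_lt_sup.2 (by rwa [span_singleton_le_iff_mem]))
  obtain ⟨m, hm, s, hs, hms⟩ := mem_sup.1 (hsup ▸ mem_top : (1 : A) ∈ M ⊔ span Aᵐᵒᵖ {j})
  obtain ⟨c, rfl⟩ := mem_span_singleton.1 hs
  have hm_eq : m = 1 - j * c.unop := by
    rw [← hms, MulOpposite.smul_eq_mul_unop, add_sub_cancel_right]
  have hjc : j * c.unop ∈ Ring.jacobson A := Ideal.mul_mem_right _ _ hj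
  exact hM.1 (eq_top_of_isUnit_mem_of_mulOpposite hm
    (hm_eq ▸ Ring.isUnit_one_sub_of_mem_jacobson hjc))

end Submodule

/-- If `A/J(A)` is commutative, then every maximal right ideal of `A` is a two-sided ideal. -/
theorem stmt_0 (A : Type*) [Ring A]
    (hcomm : ∀ a b : A, a * b - b * a ∈ (⊥ : Ideal A).jacobson) :
    IsRightQuasiInvariant A := by
  intro M hM a x hx
  have hxa : x * a ∈ M := by simpa using M.smul_mem (MulOpposite.op a) hx
  have hcomm_mem : a * x - x * a ∈ M :=
    Submodule.jacobson_le_of_isCoatom hM (Ideal.jacobson_bot (R := A) ▸ hcomm a x)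
  simpa using M.add_mem hcomm_mem hxa
end

section
/- Let A be a centrally essential ring such that A/J(A) is commutative. Then every minimal right ideal S of A is contained in the center Z(A). In particular, every minimal right ideal of A is a two-sided ideal. -/
lemma left_inv_of_mem_jac {A : Type*} [Ring A] {j : A}
    (h : j ∈ (⊥ : Ideal A).jacobson) : ∃ z : A, z * (1 - j) = 1 := by
  obtain ⟨z, hz⟩ := Ideal.mem_jacobson_iff.mp h (-1)
  refine ⟨z, ?_⟩
  have h0 : z * -1 * j + z - 1 = 0 := by simpa using hz
  have h1 : z * (1 - j) = z * -1 * j + z := by noncomm_ring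
  rw [h1, ← sub_eq_zero]; simpa using h0

lemma right_inv_of_mem_jac {A : Type*} [Ring A] {j : A}
    (h : j ∈ (⊥ : Ideal A).jacobson) : ∃ z : A, (1 - j) * z = 1 := by
  obtain ⟨z, hz⟩ := left_inv_of_mem_jac h
  have hzj : -(z * j) ∈ (⊥ : Ideal A).jacobson := neg_mem (Ideal.mul_mem_left _ z h)
  obtain ⟨w, hw⟩ := left_inv_of_mem_jac hzj
  have hz' : z = 1 + z * j := by
    have h2 : z - z * j = 1 := by rw [← hz]; noncomm_ring
    rw [← h2]; noncomm_ring
  have hwz : w * z = 1 := by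
    rw [hz']; rw [sub_neg_eq_add] at hw; exact hw
  refine ⟨z, ?_⟩
  calc (1 - j) * z = (w * z) * ((1 - j) * z) := by rw [hwz, one_mul]
    _ = w * (z * (1 - j)) * z := by noncomm_ring
    _ = 1 := by rw [hz, mul_one, hwz]

/-- The Jacobson radical (as jacobson of ⊥) is closed under right multiplication. -/
lemma jac_mul_mem_right {A : Type*} [Ring A] {j : A}
    (h : j ∈ (⊥ : Ideal A).jacobson) (b : A) : j * b ∈ (⊥ : Ideal A).jacobson :=
  Ideal.mul_mem_right b _ h

/-- In a centrally essential ring with `A/J(A)` commutative, every minimal right ideal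
is contained in the center; in particular it is a two-sided ideal. -/
theorem stmt_1 (A : Type*) [Ring A] (hce : IsCentrallyEssential A)
    (hcomm : ∀ a b : A, a * b - b * a ∈ (⊥ : Ideal A).jacobson)
    (S : Submodule Aᵐᵒᵖ A) (hS : IsAtom S) :
    (S : Set A) ⊆ Set.center A ∧ IsTwoSidedRightIdeal S := by
  -- atom fact: any nonzero submodule ≤ S equals S
  have atom_eq : ∀ N : Submodule Aᵐᵒᵖ A, N ≤ S → N ≠ ⊥ → N = S := by
    intro N hle hne
    rcases lt_or_eq_of_le hle with h | h
    · exact absurd (hS.2 N h) hne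
    · exact h
  -- get a nonzero element of S
  obtain ⟨s, hsS, hs0⟩ := Submodule.exists_mem_ne_zero_of_ne_bot hS.1
  obtain ⟨z, hz, hc0, hc⟩ := hce s hs0
  set c := s * z with hcdef
  have hcS : c ∈ S := by
    have : (MulOpposite.op z) • s ∈ S := S.smul_mem _ hsS
    simpa [MulOpposite.smul_eq_mul_unop] using this
  -- key: c annihilates the Jacobson radical
  have key : ∀ j ∈ (⊥ : Ideal A).jacobson, c * j = 0 := by
    intro j hj
    by_contra hcj
    have hcjS : c * j ∈ S := by
      have : (MulOpposite.op j) • c ∈ S := S.smul_mem _ hcS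
      simpa [MulOpposite.smul_eq_mul_unop] using this
    have hspan : Submodule.span Aᵐᵒᵖ {c * j} = S := by
      apply atom_eq
      · simpa using hcjS
      · simp [Submodule.span_singleton_eq_bot, hcj]
    have hcmem : c ∈ Submodule.span Aᵐᵒᵖ {c * j} := hspan ▸ hcS
    obtain ⟨a, ha⟩ := Submodule.mem_span_singleton.mp hcmem
    set b := MulOpposite.unop a with hb
    have hcb : c * j * b = c := by
      rw [← MulOpposite.smul_eq_mul_unop]; exact ha
    have hjb : j * b ∈ (⊥ : Ideal A).jacobson := jac_mul_mem_right hj b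
    obtain ⟨w, hw⟩ := right_inv_of_mem_jac hjb
    have hzero : c * (1 - j * b) = 0 := by
      rw [mul_sub, mul_one, ← mul_assoc, hcb, sub_self]
    have : c = 0 := by
      calc c = c * ((1 - j * b) * w) := by rw [hw, mul_one]
        _ = (c * (1 - j * b)) * w := (mul_assoc c (1 - j * b) w).symm
        _ = 0 := by rw [hzero, zero_mul]
    exact hc0 this
  -- every element of S is central
  have hsub : (S : Set A) ⊆ Set.center A := by
    intro x hx
    have hspan : Submodule.span Aᵐᵒᵖ {c} = S := by
      apply atom_eq
      · simpa using hcS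
      · simp [Submodule.span_singleton_eq_bot, hc0]
    obtain ⟨a, ha⟩ := Submodule.mem_span_singleton.mp (hspan ▸ hx)
    set b := MulOpposite.unop a with hb
    have hx' : c * b = x := by rw [← MulOpposite.smul_eq_mul_unop]; exact ha
    rw [← hx', Semigroup.mem_center_iff]
    intro g
    have h1 : c * (g * b - b * g) = 0 := key _ (hcomm g b)
    calc g * (c * b) = g * c * b := (mul_assoc g c b).symm
      _ = c * g * b := by rw [Semigroup.mem_center_iff.mp hc g]
      _ = c * (g * b) := mul_assoc c g b
      _ = c * (b * g) := by
          have := h1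
          rw [mul_sub, sub_eq_zero] at this
          exact this
      _ = (c * b) * g := (mul_assoc c b g).symm
  refine ⟨hsub, ?_⟩
  intro a x hx
  have hxc : x ∈ Set.center A := hsub hx
  have hxa : a * x = x * a := Semigroup.mem_center_iff.mp hxc a
  have : (MulOpposite.op a) • x ∈ S := S.smul_mem _ hx
  rw [hxa]
  simpa [MulOpposite.smul_eq_mul_unop] using this
end

section
/- Let A be a centrally essential ring such that A/J(A) is commutative. Then the right socle Soc(A_A) is contained in the center Z(A). -/
section aux
variable {A : Type*} [Ring A]

/-- If `1 + a * b` is a unit then so is `1 + b * a`. -/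
lemma isUnit_one_add_swap {a b : A} (h : IsUnit (1 + a * b)) : IsUnit (1 + b * a) := by
  obtain ⟨u, hu⟩ := h
  set v : A := ↑u⁻¹ with hv
  have h1 : v * (1 + a * b) = 1 := by rw [← hu]; exact u.inv_mul
  have h2 : (1 + a * b) * v = 1 := by rw [← hu]; exact u.mul_inv
  have e1 : v + a * b * v = 1 := by rw [← h2]; noncomm_ring
  have e2 : v + v * (a * b) = 1 := by rw [← h1]; noncomm_ring
  refine ⟨⟨1 + b * a, 1 - b * v * a, ?_, ?_⟩, rfl⟩
  · have : (1 + b * a) * (1 - b * v * a) = 1 + b * a - b * (v + a * b * v) * a := by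
      noncomm_ring
    rw [this, e1]; noncomm_ring
  · have : (1 - b * v * a) * (1 + b * a) = 1 + b * a - b * (v + v * (a * b)) * a := by
      noncomm_ring
    rw [this, e2]; noncomm_ring

/-- Elements of the Jacobson radical give two-sided units `1 + y * j`. -/
lemma jac_unit {j : A} (hj : j ∈ (⊥ : Ideal A).jacobson) (y : A) : IsUnit (1 + y * j) := by
  obtain ⟨z, hz⟩ := Ideal.mem_jacobson_iff.1 hj y
  rw [Ideal.mem_bot, sub_eq_zero] at hz
  have h1 : z * (1 + y * j) = 1 := by
    calc z * (1 + y * j) = z * y * j + z := by noncomm_ring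
    _ = 1 := hz
  have hz' : z = 1 + -(z * y) * j := by
    calc z = (z * y * j + z) + -(z * y) * j := by noncomm_ring
    _ = 1 + -(z * y) * j := by rw [hz]
  obtain ⟨w, hw⟩ := Ideal.mem_jacobson_iff.1 hj (-(z * y))
  rw [Ideal.mem_bot, sub_eq_zero] at hw
  have hwz : w * z = 1 := by
    calc w * z = w * (1 + -(z * y) * j) := by rw [← hz']
    _ = w * -(z * y) * j + w := by noncomm_ring
    _ = 1 := hw
  have h2 : (1 + y * j) * z = 1 := by
    have : w = 1 + y * j := by
      calc w = w * (z * (1 + y * j)) := by rw [h1, mul_one]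
      _ = (w * z) * (1 + y * j) := by rw [mul_assoc]
      _ = 1 + y * j := by rw [hwz, one_mul]
    rw [← this, hwz]
  exact ⟨⟨1 + y * j, z, h2, h1⟩, rfl⟩

lemma jac_unit' {j : A} (hj : j ∈ (⊥ : Ideal A).jacobson) (b : A) : IsUnit (1 - j * b) := by
  have := isUnit_one_add_swap (jac_unit hj (-b))
  simpa [sub_eq_add_neg] using this

lemma atom_sub_center (hce : ∀ a : A, a ≠ 0 → ∃ z ∈ Set.center A, a * z ≠ 0 ∧ a * z ∈ Set.center A)
    (hcomm : ∀ a b : A, a * b - b * a ∈ (⊥ : Ideal A).jacobson)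
    (S : Submodule Aᵐᵒᵖ A) (hS : IsAtom S) : ∀ x ∈ S, x ∈ Set.center A := by
  intro x hx
  by_cases hx0 : x = 0
  · rw [hx0]; exact Set.zero_mem_center
  -- produce a nonzero central element of S
  have hcex : ∃ c : A, c ≠ 0 ∧ c ∈ Set.center A ∧ c ∈ S := by
    obtain ⟨z, hz, hne, hc⟩ := hce x hx0
    refine ⟨x * z, hne, hc, ?_⟩
    have := S.smul_mem (MulOpposite.op z) hx
    simpa [MulOpposite.smul_eq_mul_unop] using this
  obtain ⟨c, hne, hc, hcS⟩ := hcex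
  have hcc : ∀ g : A, g * c = c * g := fun g => Semigroup.mem_center_iff.mp hc g
  -- any nonzero element of S generates S
  have hgen : ∀ y : A, y ∈ S → y ≠ 0 → Submodule.span Aᵐᵒᵖ {y} = S := by
    intro y hyS hy0
    have hle : Submodule.span Aᵐᵒᵖ {y} ≤ S := (Submodule.span_singleton_le_iff_mem _ _).2 hyS
    rcases hle.lt_or_eq with h | h
    · exact absurd (hS.2 _ h) (by simp [Submodule.span_singleton_eq_bot, hy0])
    · exact h
  -- c annihilates the Jacobson radical on the right
  have hann : ∀ j ∈ (⊥ : Ideal A).jacobson, c * j = 0 := by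
    intro j hj
    by_contra hcj
    have hcjS : c * j ∈ S := by
      have := S.smul_mem (MulOpposite.op j) hcS
      simpa [MulOpposite.smul_eq_mul_unop] using this
    have hspan := hgen _ hcjS hcj
    have hcmem : c ∈ Submodule.span Aᵐᵒᵖ {c * j} := hspan ▸ hcS
    obtain ⟨m, hm⟩ := Submodule.mem_span_singleton.1 hcmem
    rw [MulOpposite.smul_eq_mul_unop] at hm
    set b := m.unop
    have hzero : c * (1 - j * b) = 0 := by
      have : c * (1 - j * b) = c - c * j * b := by noncomm_ring
      rw [this, hm, sub_self]
    obtain ⟨u, hu⟩ := jac_unit' hj b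
    have : c = 0 := by
      calc c = c * ((1 - j * b) * ↑u⁻¹) := by rw [← hu, u.mul_inv, mul_one]
      _ = c * (1 - j * b) * ↑u⁻¹ := by rw [mul_assoc]
      _ = 0 := by rw [hzero, zero_mul]
    exact hne this
  -- every right multiple of c is central
  have hmul : ∀ b : A, c * b ∈ Set.center A := by
    intro b
    rw [Semigroup.mem_center_iff]
    intro g
    calc g * (c * b) = c * (g * b) := by rw [← mul_assoc, hcc g, mul_assoc]
    _ = c * (b * g) + c * (g * b - b * g) := by noncomm_ring
    _ = c * (b * g) := by rw [hann _ (hcomm g b), add_zero]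
    _ = c * b * g := by rw [mul_assoc]
  -- x itself is a right multiple of c
  have hspan := hgen c hcS hne
  have hxmem : x ∈ Submodule.span Aᵐᵒᵖ {c} := hspan ▸ hx
  obtain ⟨m, hm⟩ := Submodule.mem_span_singleton.1 hxmem
  rw [MulOpposite.smul_eq_mul_unop] at hm
  rw [← hm]
  exact hmul m.unop

end aux

/-- In a centrally essential ring with `A/J(A)` commutative, the right socle (the sum of
all minimal right ideals) is contained in the center. -/
theorem stmt_2 (A : Type*) [Ring A] (hce : IsCentrallyEssential A)
    (hcomm : ∀ a b : A, a * b - b * a ∈ (⊥ : Ideal A).jacobson) :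
    ∀ x ∈ sSup {S : Submodule Aᵐᵒᵖ A | IsAtom S}, x ∈ Set.center A := by
  intro x hx
  rw [sSup_eq_iSup'] at hx
  exact Submodule.iSup_induction _ (motive := fun y => y ∈ Set.center A) hx
    (fun i y hy => atom_sub_center hce hcomm i i.2 y hy)
    Set.zero_mem_center
    (fun a b ha hb => Set.add_mem_center ha hb)
end

section
/- Let A be a division ring such that the polynomial ring A[x] is right quasi-invariant (every maximal right ideal of A[x] is a two-sided ideal). Then A is commutative, i.e., A is a field. -/
/-! For `a ∈ A` the right ideal `(x - a)A[x]` is maximal, because division by the monic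
`x - a` leaves a constant remainder. If it is two-sided, then `b(x - a) = (x - a)q` for every
`b ∈ A`; comparing degrees forces `q` to be a constant `c`, and comparing coefficients gives
`c = b` and `ba = ac = ab`. -/

open Polynomial

namespace Submodule

variable {R : Type*} [Ring R]

theorem mem_span_singleton_op {g v : R} : v ∈ span Rᵐᵒᵖ {g} ↔ ∃ q, g * q = v := by
  simp only [mem_span_singleton, MulOpposite.exists, op_smul_eq_mul]

theorem eq_top_of_isUnit_mem_op {N : Submodule Rᵐᵒᵖ R} {u : R} (hu : u ∈ N) (h : IsUnit u) :
    N = ⊤ := by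
  obtain ⟨u, rfl⟩ := h
  refine eq_top_iff'.mpr fun g => ?_
  simpa only [op_smul_eq_mul, Units.mul_inv_cancel_left] using
    N.smul_mem (MulOpposite.op (↑u⁻¹ * g)) hu

end Submodule

namespace Polynomial

variable {R : Type*} [Ring R]

theorem exists_eq_X_sub_C_mul_add_C [Nontrivial R] (a : R) (f : R[X]) :
    ∃ q r, f = (X - C a) * q + C r := by
  have hdeg : degree (f %ₘ (X - C a)) ≤ 0 := by
    have := degree_modByMonic_lt f (monic_X_sub_C a)
    rw [degree_X_sub_C] at this
    exact Nat.WithBot.lt_one_iff_le_zero.mp this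
  refine ⟨f /ₘ (X - C a), (f %ₘ (X - C a)).coeff 0, ?_⟩
  rw [← eq_C_of_degree_le_zero hdeg, add_comm, modByMonic_add_div]

theorem commute_of_X_sub_C_mul_eq_C_mul_X_sub_C [Nontrivial R] {a b : R} {q : R[X]}
    (h : (X - C a) * q = C b * (X - C a)) : Commute a b := by
  have hq : q.natDegree = 0 := by
    by_cases hq0 : q = 0
    · simp [hq0]
    have hdeg := (monic_X_sub_C a).natDegree_mul' hq0
    have hle : (C b * (X - C a)).natDegree ≤ 1 :=
      natDegree_mul_le.trans (by simp)
    rw [h, natDegree_X_sub_C] at hdeg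
    omega
  obtain ⟨c, rfl⟩ := natDegree_eq_zero.mp hq
  have h1 := congrArg (coeff · 1) h
  have h0 := congrArg (coeff · 0) h
  simp only [sub_mul, mul_sub, X_mul_C, coeff_sub, coeff_mul_X, coeff_mul_C, coeff_C,
    one_ne_zero, ↓reduceIte, mul_coeff_zero, coeff_X_zero, mul_zero, zero_mul, sub_zero, zero_sub,
    neg_inj] at h1 h0
  subst h1
  exact h0

theorem isCoatom_span_X_sub_C {K : Type*} [DivisionRing K] (a : K) :
    IsCoatom (Submodule.span K[X]ᵐᵒᵖ {X - C a}) := by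
  refine isCoatom_iff_ge_of_le.mpr ⟨fun htop => ?_, fun N hN hle f hf => ?_⟩
  · have hone : (1 : K[X]) ∈ Submodule.span K[X]ᵐᵒᵖ {X - C a} := htop ▸ Submodule.mem_top
    obtain ⟨q, hq⟩ := Submodule.mem_span_singleton_op.mp hone
    have hq0 : q ≠ 0 := by rintro rfl; simp at hq
    have hdeg := (monic_X_sub_C a).natDegree_mul' hq0
    rw [hq, natDegree_X_sub_C, natDegree_one] at hdeg
    omega
  · obtain ⟨q, r, rfl⟩ := exists_eq_X_sub_C_mul_add_C a f
    have hmul : (X - C a) * q ∈ Submodule.span K[X]ᵐᵒᵖ {X - C a} :=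
      Submodule.mem_span_singleton_op.mpr ⟨q, rfl⟩
    have hr : r = 0 := by
      by_contra hr
      refine hN (Submodule.eq_top_of_isUnit_mem_op ?_ (isUnit_C.mpr (Ne.isUnit hr)))
      simpa using N.sub_mem hf (hle hmul)
    simpa [hr] using hmul

end Polynomial

/-- If `A` is a division ring and `A[x]` is right quasi-invariant, then `A` is
commutative (i.e. `A` is a field). -/
theorem stmt_6 (A : Type*) [DivisionRing A]
    (h : IsRightQuasiInvariant (Polynomial A)) :
    ∀ a b : A, a * b = b * a := by
  intro a b
  have hmem : C b * (X - C a) ∈ Submodule.span A[X]ᵐᵒᵖ {X - C a} :=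
    h _ (isCoatom_span_X_sub_C a) (C b) _ (Submodule.mem_span_singleton_self _)
  obtain ⟨q, hq⟩ := Submodule.mem_span_singleton_op.mp hmem
  exact commute_of_X_sub_C_mul_eq_C_mul_X_sub_C hq
end

section
/- Let A be a ring such that the polynomial ring A[x] is right quasi-invariant. Then the factor ring A/J(A) is commutative. -/
/-!
Every maximal right ideal `M` of `A` is the preimage of a maximal right ideal of `A[X]` under
`X ↦ 0`, hence two-sided; so `A ⧸ M` is a ring, and `(A ⧸ M)[X]`, a quotient of `A[X]`, is again
right quasi-invariant. In a nontrivial ring `R` with `R[X]` right quasi-invariant, `X - a` has no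
right inverse (by degrees), so it lies in a maximal right ideal `N` of `R[X]`; as `N` is two-sided
it contains `b (X - a) - (X - a) b = a b - b a`, which therefore has no right inverse either.
Applied in `A ⧸ M`, this puts every commutator into every maximal right ideal of `A`, and the
intersection of the maximal right ideals is `J(A)` by Jacobson's lemma.
-/

open Polynomial MulOpposite

section RightIdeal

variable {R : Type*} [Ring R]

theorem rightIdeal_eq_top_of_one_mem {I : Submodule Rᵐᵒᵖ R} (h : (1 : R) ∈ I) : I = ⊤ :=
  eq_top_iff.2 fun x _ => by simpa using I.smul_mem (op x) h

-- Makes `IsCoatomic (Submodule Rᵐᵒᵖ R)` available: every proper right ideal is in a maximal one.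
instance : Module.Finite Rᵐᵒᵖ R :=
  ⟨⟨{1}, rightIdeal_eq_top_of_one_mem (Submodule.subset_span (by simp))⟩⟩

theorem exists_isCoatom_mem_of_forall_mul_ne_one {u : R} (hu : ∀ v, u * v ≠ 1) :
    ∃ M : Submodule Rᵐᵒᵖ R, IsCoatom M ∧ u ∈ M := by
  obtain h | ⟨M, hM, hle⟩ := eq_top_or_exists_le_coatom (Submodule.span Rᵐᵒᵖ {u})
  · obtain ⟨v, hv⟩ := Submodule.mem_span_singleton.1 (h ▸ Submodule.mem_top (x := (1 : R)))
    exact absurd (by simpa [smul_eq_mul_unop] using hv) (hu v.unop)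
  · exact ⟨M, hM, hle (Submodule.mem_span_singleton_self u)⟩

theorem exists_add_mul_eq_one_of_notMem {M : Submodule Rᵐᵒᵖ R} (hM : IsCoatom M) {r : R}
    (hr : r ∉ M) : ∃ m ∈ M, ∃ s, m + r * s = 1 := by
  have htop : M ⊔ Submodule.span Rᵐᵒᵖ {r} = ⊤ :=
    hM.2 _ (left_lt_sup.2 fun h => hr (h (Submodule.mem_span_singleton_self r)))
  obtain ⟨m, hm, y, hy, hsum⟩ := Submodule.mem_sup.1 (htop ▸ Submodule.mem_top (x := (1 : R)))
  obtain ⟨s, rfl⟩ := Submodule.mem_span_singleton.1 hy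
  exact ⟨m, hm, s.unop, by simpa [smul_eq_mul_unop] using hsum⟩

theorem exists_one_add_mul_eq_one_of_mem_jacobson {z : R} (hz : z ∈ Module.jacobson Rᵐᵒᵖ R) :
    ∃ v, (1 + z) * v = 1 := by
  by_contra! h
  obtain ⟨M, hM, h1z⟩ := exists_isCoatom_mem_of_forall_mul_ne_one h
  exact hM.1 <| rightIdeal_eq_top_of_one_mem <| by
    simpa using M.sub_mem h1z (Submodule.mem_sInf.1 hz M hM)

theorem isUnit_one_add_of_mem_jacobson {z : R} (hz : z ∈ Module.jacobson Rᵐᵒᵖ R) :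
    IsUnit (1 + z) := by
  obtain ⟨u, hu⟩ := exists_one_add_mul_eq_one_of_mem_jacobson hz
  have hu' : u = 1 + -(z * u) := by
    rw [← sub_eq_add_neg, eq_sub_iff_add_eq, ← one_add_mul, hu]
  have hzu : -(z * u) ∈ Module.jacobson Rᵐᵒᵖ R :=
    Submodule.neg_mem _ (by simpa using Submodule.smul_mem _ (op u) hz)
  obtain ⟨v, hv⟩ := exists_one_add_mul_eq_one_of_mem_jacobson hzu
  rw [← hu'] at hv
  have hv1 : v = 1 + z := by
    calc v = (1 + z) * u * v := by rw [hu, one_mul]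
    _ = 1 + z := by rw [mul_assoc, hv, mul_one]
  exact ⟨⟨1 + z, u, hu, hv1 ▸ hv⟩, rfl⟩

theorem isUnit_one_add_mul_comm {a b : R} (h : IsUnit (1 + a * b)) : IsUnit (1 + b * a) := by
  obtain ⟨u, hu⟩ := h
  refine ⟨⟨1 + b * a, 1 - b * ↑u⁻¹ * a, ?_, ?_⟩, rfl⟩
  · calc (1 + b * a) * (1 - b * ↑u⁻¹ * a) = 1 + b * a - b * ((1 + a * b) * ↑u⁻¹) * a := by
          noncomm_ring
    _ = 1 := by rw [← hu, Units.mul_inv]; noncomm_ring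
  · calc (1 - b * ↑u⁻¹ * a) * (1 + b * a) = 1 + b * a - b * (↑u⁻¹ * (1 + a * b)) * a := by
          noncomm_ring
    _ = 1 := by rw [← hu, Units.inv_mul]; noncomm_ring

theorem mem_jacobson_bot_of_mem_jacobson_mulOpposite {x : R}
    (hx : x ∈ Module.jacobson Rᵐᵒᵖ R) : x ∈ (⊥ : Ideal R).jacobson := by
  refine Ideal.mem_jacobson_iff.2 fun y => ?_
  have hxy : x * y ∈ Module.jacobson Rᵐᵒᵖ R := by simpa using Submodule.smul_mem _ (op y) hx
  obtain ⟨u, hu⟩ := isUnit_one_add_mul_comm (isUnit_one_add_of_mem_jacobson hxy)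
  refine ⟨↑u⁻¹, ?_⟩
  rw [Submodule.mem_bot, mul_assoc, ← mul_add_one, add_comm, ← hu, Units.inv_mul, sub_self]

def IsTwoSidedRightIdeal.toTwoSidedIdeal {I : Submodule Rᵐᵒᵖ R} (hI : IsTwoSidedRightIdeal I) :
    TwoSidedIdeal R :=
  .mk' I I.zero_mem I.add_mem I.neg_mem (hI _ _) fun {_ y} hx => by
    simpa using I.smul_mem (op y) hx

@[simp]
theorem IsTwoSidedRightIdeal.mem_toTwoSidedIdeal {I : Submodule Rᵐᵒᵖ R}
    (hI : IsTwoSidedRightIdeal I) {x : R} : x ∈ hI.toTwoSidedIdeal ↔ x ∈ I :=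
  TwoSidedIdeal.mem_mk' _ _ _ _ _ _ x

end RightIdeal

section QuasiInvariant

variable {R S : Type*} [Ring R] [Ring S]

def RingHom.toRightSemilinearMap (f : R →+* S) : R →ₛₗ[RingHom.op f] S where
  toFun := f
  map_add' := map_add f
  map_smul' r x := map_mul f x r.unop

theorem IsRightQuasiInvariant.of_surjective (h : IsRightQuasiInvariant R) (f : R →+* S)
    (hf : Function.Surjective f) : IsRightQuasiInvariant S := by
  have : RingHomSurjective (RingHom.op f) :=
    ⟨fun s => ⟨op (hf s.unop).choose, congrArg op (hf s.unop).choose_spec⟩⟩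
  intro M hM s x hx
  obtain ⟨r, rfl⟩ := hf s
  obtain ⟨y, rfl⟩ := hf x
  rw [← map_mul]
  exact h (M.comap f.toRightSemilinearMap) ((Submodule.isCoatom_comap_iff hf).2 hM) r y hx

theorem Polynomial.X_sub_C_mul_ne_one [Nontrivial R] (a : R) (p : R[X]) : (X - C a) * p ≠ 1 := by
  intro h
  have hp : p ≠ 0 := by rintro rfl; simp at h
  have := congrArg natDegree h
  rw [(monic_X_sub_C a).natDegree_mul' hp, natDegree_X_sub_C, natDegree_one] at this
  omega

theorem IsRightQuasiInvariant.commutator_mul_ne_one [Nontrivial R]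
    (h : IsRightQuasiInvariant R[X]) (a b u : R) : (a * b - b * a) * u ≠ 1 := by
  intro hu
  obtain ⟨M, hM, hXa⟩ := exists_isCoatom_mem_of_forall_mul_ne_one (X_sub_C_mul_ne_one a)
  have hcomm : C (a * b - b * a) ∈ M := by
    have : C (a * b - b * a) = C b * (X - C a) - (X - C a) * C b := by
      simp only [map_sub, map_mul, mul_sub, sub_mul, X_mul]
      abel
    rw [this]
    exact M.sub_mem (h M hM _ _ hXa) (by simpa using M.smul_mem (op (C b)) hXa)
  refine hM.1 (rightIdeal_eq_top_of_one_mem ?_)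
  have h1 := M.smul_mem (op (C u)) hcomm
  rwa [op_smul_eq_mul, ← map_mul, hu, map_one] at h1

end QuasiInvariant

theorem IsRightQuasiInvariant.commutator_mem_of_isCoatom {A : Type*} [Ring A]
    (h : IsRightQuasiInvariant A[X]) {M : Submodule Aᵐᵒᵖ A} (hM : IsCoatom M) (a b : A) :
    a * b - b * a ∈ M := by
  by_contra hc
  obtain ⟨m, hm, s, hs⟩ := exists_add_mul_eq_one_of_notMem hM hc
  have hA : IsRightQuasiInvariant A := h.of_surjective constantCoeff constantCoeff_surjective
  set I := (hA M hM).toTwoSidedIdeal.asIdeal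
  have hI : I ≠ ⊤ := fun htop => hM.1 <| rightIdeal_eq_top_of_one_mem <| by
    simpa [I] using (Ideal.eq_top_iff_one I).1 htop
  have := Ideal.Quotient.nontrivial_iff.2 hI
  let π := Ideal.Quotient.mk I
  have hQ : IsRightQuasiInvariant (A ⧸ I)[X] :=
    h.of_surjective (mapRingHom π) (map_surjective _ Ideal.Quotient.mk_surjective)
  apply hQ.commutator_mul_ne_one (π a) (π b) (π s)
  have hπm : π m = 0 := Ideal.Quotient.eq_zero_iff_mem.2 (by simpa [I] using hm)
  simpa [hπm] using congrArg π hs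

/-- If the polynomial ring `A[x]` is right quasi-invariant, then `A/J(A)` is
commutative. -/
theorem stmt_8 (A : Type*) [Ring A]
    (h : IsRightQuasiInvariant (Polynomial A)) :
    ∀ a b : A, a * b - b * a ∈ (⊥ : Ideal A).jacobson := fun a b =>
  mem_jacobson_bot_of_mem_jacobson_mulOpposite <|
    Submodule.mem_sInf.2 fun _ hM => h.commutator_mem_of_isCoatom hM a b
end

section
/- If A is a centrally essential ring, then the polynomial ring A[x] is centrally essential. -/
theorem IsCentrallyEssential.exists_mul_mem_center_of_finset {A ι : Type*} [Ring A]
    (h : IsCentrallyEssential A) (s : Finset ι) (f : ι → A) (hf : ∃ i ∈ s, f i ≠ 0) :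
    ∃ z ∈ Set.center A, (∀ i ∈ s, f i * z ∈ Set.center A) ∧ ∃ i ∈ s, f i * z ≠ 0 := by
  classical
  induction s using Finset.induction_on with
  | empty => simp at hf
  | insert j s _ ih =>
    by_cases hs : ∃ i ∈ s, f i ≠ 0
    · obtain ⟨z, hz, hcen, i, hi, hiz⟩ := ih hs
      by_cases hjz : f j * z = 0
      · refine ⟨z, hz, Finset.forall_mem_insert _ _ _ |>.mpr ⟨?_, hcen⟩,
          i, Finset.mem_insert_of_mem hi, hiz⟩
        rw [hjz]
        exact Set.zero_mem_center
      · obtain ⟨w, hw, hjzw, hjzw_cen⟩ := h _ hjz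
        refine ⟨z * w, Set.mul_mem_center hz hw, ?_, j, Finset.mem_insert_self j s, ?_⟩
        · simp only [Finset.forall_mem_insert, ← mul_assoc]
          exact ⟨hjzw_cen, fun i hi => Set.mul_mem_center (hcen i hi) hw⟩
        · rwa [← mul_assoc]
    · have hj : f j ≠ 0 := ((Finset.exists_mem_insert _ _ _).mp hf).resolve_right hs
      push Not at hs
      obtain ⟨z, hz, hjz, hjz_cen⟩ := h _ hj
      refine ⟨z, hz, ?_, j, Finset.mem_insert_self j s, hjz⟩
      simp only [Finset.forall_mem_insert]
      refine ⟨hjz_cen, fun i hi => ?_⟩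
      rw [hs i hi, zero_mul]
      exact Set.zero_mem_center

namespace Polynomial

theorem C_mem_center {A : Type*} [Semiring A] {a : A} (ha : a ∈ Set.center A) :
    C a ∈ Set.center A[X] :=
  Semigroup.mem_center_iff.mpr fun p => by
    ext n
    rw [coeff_mul_C, coeff_C_mul, Semigroup.mem_center_iff.mp ha]

theorem X_pow_mem_center {A : Type*} [Semiring A] (n : ℕ) : (X ^ n : A[X]) ∈ Set.center A[X] :=
  Semigroup.mem_center_iff.mpr fun _ => X_pow_mul.symm

theorem mem_center_of_forall_coeff_mem_center {A : Type*} [Semiring A] {p : A[X]}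
    (hp : ∀ n, p.coeff n ∈ Set.center A) : p ∈ Set.center A[X] := by
  rw [p.as_sum_support_C_mul_X_pow]
  exact (Subsemiring.center A[X]).sum_mem fun n _ =>
    Set.mul_mem_center (C_mem_center (hp n)) (X_pow_mem_center n)

end Polynomial

open Polynomial in
/-- If `A` is centrally essential, then the polynomial ring `A[x]` is centrally
essential. -/
theorem stmt_10 (A : Type*) [Ring A] (h : IsCentrallyEssential A) :
    IsCentrallyEssential (Polynomial A) := by
  intro p hp
  obtain ⟨z, hz, hcen, i, -, hiz⟩ := h.exists_mul_mem_center_of_finset p.support p.coeff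
    ⟨p.natDegree, natDegree_mem_support_of_nonzero hp, mt leadingCoeff_eq_zero.mp hp⟩
  refine ⟨C z, C_mem_center hz, fun h0 => hiz ?_, mem_center_of_forall_coeff_mem_center fun n => ?_⟩
  · rw [← coeff_mul_C, h0, coeff_zero]
  · rw [coeff_mul_C]
    by_cases hn : n ∈ p.support
    · exact hcen n hn
    · rw [notMem_support_iff.mp hn, zero_mul]
      exact Set.zero_mem_center
end

section
/- Let F be a field and let 𝒜 be the set of 7×7 matrices over F of the form with diagonal entries all equal to some α ∈ F, first row (α, a, b, c, d, e, f), second row (0, α, 0, b, 0, 0, d), third row (0, 0, α, 0, 0, 0, e), fourth row (0, 0, 0, α, 0, 0, 0), fifth row (0, 0, 0, 0, α, 0, a), sixth row (0, 0, 0, 0, 0, α, b), seventh row (0, 0, 0, 0, 0, 0, α), where α, a, b, c, d, e, f range over F. Then 𝒜 is a unital subalgebra of the algebra of 7×7 matrices over F. -/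
/-- The generic element of the 7-dimensional subalgebra `𝒜` of `M₇(F)` from the paper:
diagonal `α`, first row `(α, a, b, c, d, e, f)`, and additional entries
`A[2,4] = b`, `A[2,7] = d`, `A[3,7] = e`, `A[5,7] = a`, `A[6,7] = b`. -/
def mat (F : Type*) [Field F] (α a b c d e f : F) : Matrix (Fin 7) (Fin 7) F :=
  !![α, a, b, c, d, e, f;
     0, α, 0, b, 0, 0, d;
     0, 0, α, 0, 0, 0, e;
     0, 0, 0, α, 0, 0, 0;
     0, 0, 0, 0, α, 0, a;
     0, 0, 0, 0, 0, α, b;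
     0, 0, 0, 0, 0, 0, α]

/-- The underlying set of the algebra `𝒜`. -/
def ASet (F : Type*) [Field F] : Set (Matrix (Fin 7) (Fin 7) F) :=
  {M | ∃ α a b c d e f : F, M = mat F α a b c d e f}

lemma mat_add (F : Type*) [Field F] (α a b c d e f α' a' b' c' d' e' f' : F) :
    mat F α a b c d e f + mat F α' a' b' c' d' e' f' =
      mat F (α + α') (a + a') (b + b') (c + c') (d + d') (e + e') (f + f') := by
  simp [← Matrix.ext_iff, Fin.forall_fin_succ, mat]

lemma mat_mul (F : Type*) [Field F] (α a b c d e f α' a' b' c' d' e' f' : F) :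
    mat F α a b c d e f * mat F α' a' b' c' d' e' f' =
      mat F (α * α') (α * a' + a * α') (α * b' + b * α')
        (α * c' + a * b' + c * α') (α * d' + d * α') (α * e' + e * α')
        (α * f' + a * d' + b * e' + d * a' + e * b' + f * α') := by
  simp [← Matrix.ext_iff, Fin.forall_fin_succ, mat, Matrix.mul_apply, Fin.sum_univ_succ]
  ring_nf
  simp

lemma mat_smul (F : Type*) [Field F] (r α a b c d e f : F) :
    r • mat F α a b c d e f = mat F (r * α) (r * a) (r * b) (r * c) (r * d) (r * e) (r * f) := by
  simp [← Matrix.ext_iff, Fin.forall_fin_succ, mat]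

lemma mat_scalar (F : Type*) [Field F] (r : F) :
    (Matrix.scalar (Fin 7) r : Matrix (Fin 7) (Fin 7) F) = mat F r 0 0 0 0 0 0 := by
  ext i j
  fin_cases i <;> fin_cases j <;> simp [mat, Matrix.scalar_apply, Matrix.diagonal_apply]

/-- The set `𝒜` of such matrices is a unital `F`-subalgebra of `M₇(F)`. -/
theorem stmt_12 (F : Type*) [Field F] :
    ∃ S : Subalgebra F (Matrix (Fin 7) (Fin 7) F), (S : Set (Matrix (Fin 7) (Fin 7) F)) = ASet F := by
  refine ⟨{ carrier := ASet F
            mul_mem' := ?hmul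
            one_mem' := ?hone
            add_mem' := ?hadd
            zero_mem' := ?hzero
            algebraMap_mem' := ?halg }, rfl⟩
  case hadd =>
    rintro x y ⟨α, a, b, c, d, e, f, rfl⟩ ⟨α', a', b', c', d', e', f', rfl⟩
    exact ⟨_, _, _, _, _, _, _, mat_add F α a b c d e f α' a' b' c' d' e' f'⟩
  case hmul =>
    rintro x y ⟨α, a, b, c, d, e, f, rfl⟩ ⟨α', a', b', c', d', e', f', rfl⟩
    exact ⟨_, _, _, _, _, _, _, mat_mul F α a b c d e f α' a' b' c' d' e' f'⟩
  case hone =>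
    refine ⟨1, 0, 0, 0, 0, 0, 0, ?_⟩
    rw [← mat_scalar]; simp
  case hzero =>
    refine ⟨0, 0, 0, 0, 0, 0, 0, ?_⟩
    simp [← Matrix.ext_iff, Fin.forall_fin_succ, mat]
  case halg =>
    intro r
    refine ⟨r, 0, 0, 0, 0, 0, 0, ?_⟩
    rw [← mat_scalar]
    rfl
end

section
/- Let F be a field and 𝒜 the 7-dimensional F-subalgebra of M_7(F) consisting of matrices A(α,a,b,c,d,e,f) with diagonal α, first row (α,a,b,c,d,e,f), and additional nonzero entries A[2,4]=b, A[2,7]=d, A[3,7]=e, A[5,7]=a, A[6,7]=b. Then 𝒜 is a centrally essential ring: for every A ∈ 𝒜 not in Z(𝒜), there exist nonzero central elements B, C ∈ Z(𝒜) with AB = C. -/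
/-- The center of `𝒜` as a subset of `𝒜`. -/
def ZSet (F : Type*) [Field F] : Set (Matrix (Fin 7) (Fin 7) F) :=
  {M | M ∈ ASet F ∧ ∀ N ∈ ASet F, M * N = N * M}

/-!
By `mat_mul`, the elements of `𝒜` with `a = b = 0` are central. A noncentral `A` thus has
`a ≠ 0` or `b ≠ 0`, and its product with the central element `B` whose only nonzero
coordinates are `d = s`, `e = t` is central with last coordinate `a * s + b * t`. Take
`(s, t) = (1, 0)` or `(0, 1)`: the choice `(s, t) = (a, b)` fails when `a² + b² = 0`.
Then `C = A * B ≠ 0` forces `B ≠ 0`.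
-/

section

variable (F : Type*) [Field F]

theorem mat_mul_s14 (α a b c d e f β p q r s t u : F) :
    mat F α a b c d e f * mat F β p q r s t u =
      mat F (α * β) (α * p + β * a) (α * q + β * b) (α * r + a * q + β * c) (α * s + β * d)
        (α * t + β * e) (α * u + a * s + b * t + d * p + e * q + β * f) := by
  ext i j
  fin_cases i <;> fin_cases j <;> simp [mat, Matrix.mul_apply, Fin.sum_univ_seven] <;> ring

theorem mat_mem_ZSet (α c d e f : F) : mat F α 0 0 c d e f ∈ ZSet F := by
  refine ⟨⟨α, 0, 0, c, d, e, f, rfl⟩, ?_⟩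
  rintro N ⟨β, p, q, r, s, t, u, rfl⟩
  rw [mat_mul_s14, mat_mul_s14]
  congr 1 <;> ring

theorem mat_mul_mat_de (α a b c d e f s t : F) :
    mat F α a b c d e f * mat F 0 0 0 0 s t 0 = mat F 0 0 0 0 (α * s) (α * t) (a * s + b * t) := by
  rw [mat_mul_s14]
  congr 1 <;> ring

variable {F} in
theorem mat_ne_zero_of_last_ne_zero {α a b c d e f : F} (hf : f ≠ 0) : mat F α a b c d e f ≠ 0 :=
  fun h => hf (by simpa [mat] using congrFun (congrFun h 0) 6)

end

/-- `𝒜` is a centrally essential ring: every noncentral element `A` admits nonzero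
central `B`, `C` with `A * B = C`. -/
theorem stmt_14 (F : Type*) [Field F] :
    ∀ A ∈ ASet F, A ∉ ZSet F →
      ∃ B C : Matrix (Fin 7) (Fin 7) F,
        B ∈ ZSet F ∧ C ∈ ZSet F ∧ B ≠ 0 ∧ C ≠ 0 ∧ A * B = C := by
  rintro A ⟨α, a, b, c, d, e, f, rfl⟩ hA
  have hab : a ≠ 0 ∨ b ≠ 0 := by
    by_contra! h
    obtain ⟨rfl, rfl⟩ := h
    exact hA (mat_mem_ZSet F α c d e f)
  obtain ⟨s, t, hst⟩ : ∃ s t : F, a * s + b * t ≠ 0 := by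
    rcases hab with h | h
    exacts [⟨1, 0, by simpa using h⟩, ⟨0, 1, by simpa using h⟩]
  have hC : mat F 0 0 0 0 (α * s) (α * t) (a * s + b * t) ≠ 0 := mat_ne_zero_of_last_ne_zero hst
  refine ⟨_, _, mat_mem_ZSet F 0 0 s t 0, mat_mem_ZSet F 0 0 _ _ _, fun hB => hC ?_, hC,
    mat_mul_mat_de F α a b c d e f s t⟩
  rw [← mat_mul_mat_de F α a b c d e f s t, hB, mul_zero]
end

section
/- Let F be a field and 𝒜 the described 7-dimensional subalgebra of M_7(F). Let J be the subset of 𝒜 consisting of matrices whose only possibly nonzero entries are D[1,2]=a, D[1,7]=f, D[5,7]=a for a, f ∈ F. Then J is a left ideal of 𝒜 but not a two-sided ideal of 𝒜. -/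
/-- The set `J`: matrices whose only possibly nonzero entries are
`D[1,2] = a`, `D[1,7] = f`, `D[5,7] = a`; these are exactly the matrices
`mat 0 a 0 0 0 0 f`. -/
def JSet (F : Type*) [Field F] : Set (Matrix (Fin 7) (Fin 7) F) :=
  {D | ∃ a f : F, D = mat F 0 a 0 0 0 0 f}

/-- `J` is a left ideal of `𝒜` but not a two-sided ideal of `𝒜`. -/
theorem stmt_17 (F : Type*) [Field F] :
    JSet F ⊆ ASet F ∧
    (0 : Matrix (Fin 7) (Fin 7) F) ∈ JSet F ∧
    (∀ D₁ ∈ JSet F, ∀ D₂ ∈ JSet F, D₁ + D₂ ∈ JSet F) ∧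
    (∀ D ∈ JSet F, -D ∈ JSet F) ∧
    (∀ D ∈ JSet F, ∀ A ∈ ASet F, A * D ∈ JSet F) ∧
    ¬ (∀ D ∈ JSet F, ∀ A ∈ ASet F, D * A ∈ JSet F) := by
  refine ⟨?_, ?_, ?_, ?_, ?_, ?_⟩
  · rintro D ⟨a, f, rfl⟩
    exact ⟨0, a, 0, 0, 0, 0, f, rfl⟩
  · refine ⟨0, 0, ?_⟩
    ext i j
    revert i j
    simp [mat, Fin.forall_fin_succ, Matrix.cons_val_zero, Matrix.cons_val_succ]
  · rintro D₁ ⟨a₁, f₁, rfl⟩ D₂ ⟨a₂, f₂, rfl⟩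
    refine ⟨a₁ + a₂, f₁ + f₂, ?_⟩
    ext i j
    revert i j
    simp [mat, Fin.forall_fin_succ, Matrix.cons_val_zero, Matrix.cons_val_succ]
  · rintro D ⟨a, f, rfl⟩
    refine ⟨-a, -f, ?_⟩
    ext i j
    revert i j
    simp [mat, Fin.forall_fin_succ, Matrix.cons_val_zero, Matrix.cons_val_succ]
  · rintro D ⟨a, f, rfl⟩ A ⟨α, a', b', c', d', e', f', rfl⟩
    refine ⟨α * a, α * f + d' * a, ?_⟩
    ext i j
    revert i j
    simp [mat, Matrix.mul_apply, Fin.forall_fin_succ, Fin.sum_univ_succ,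
      Matrix.cons_val_zero, Matrix.cons_val_succ]
  · intro h
    obtain ⟨a, f, hEq⟩ := h (mat F 0 1 0 0 0 0 0) ⟨1, 0, rfl⟩
      (mat F 0 0 1 0 0 0 0) ⟨0, 0, 1, 0, 0, 0, 0, rfl⟩
    have h1 := congrFun (congrFun hEq 0) ⟨3, by norm_num⟩
    simp [mat, Matrix.mul_apply, Fin.sum_univ_succ, show ((⟨3, by norm_num⟩ : Fin 7)) = (0 : Fin 4).succ.succ.succ from rfl,
      Matrix.cons_val_zero, Matrix.cons_val_succ] at h1
end

section
/- There exists a noncommutative centrally essential ring containing a right ideal that is not a two-sided ideal. -/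
/-- `A` is not commutative. -/
def IsNoncommutative (A : Type*) [Ring A] : Prop := ¬ ∀ x y : A, x * y = y * x

/-- `A` has a right ideal which is not a two-sided ideal. -/
def HasNonTwoSidedRightIdeal (A : Type*) [Ring A] : Prop :=
  ∃ I : Submodule Aᵐᵒᵖ A, ¬ IsTwoSidedRightIdeal I

/-
We construct the 9-dimensional `F₂`-algebra
`A = F₂⟨x,y⟩ / (x³, y³, x²y - xyx, xyx - yx², xy² - yxy, yxy - y²x, (deg ≥ 4))`
with basis `1, x, y, x², xy, yx, y², t₁ = xyx, t₂ = yxy`.  All elements of degree ≥ 2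
are central, `xy ≠ yx`, and multiplication by the central element `xy` sends any
noncentral element to a nonzero central element.  The right ideal `xA` is not
two-sided since `yx ∉ xA`.
-/

def CE9 : Type := Fin 9 → ZMod 2

namespace CE9

instance : AddCommGroup CE9 := inferInstanceAs (AddCommGroup (Fin 9 → ZMod 2))
instance : DecidableEq CE9 := inferInstanceAs (DecidableEq (Fin 9 → ZMod 2))

@[simp] lemma add_apply (a b : CE9) (k : Fin 9) : (a + b) k = a k + b k := rfl
@[simp] lemma zero_apply (k : Fin 9) : (0 : CE9) k = 0 := rfl

/-- Multiplication: basis indices `0:1, 1:x, 2:y, 3:x², 4:xy, 5:yx, 6:y², 7:xyx, 8:yxy`. -/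
def amul (a b : CE9) : CE9 := fun k =>
  match k with
  | ⟨0, _⟩ => a 0 * b 0
  | ⟨1, _⟩ => a 0 * b 1 + a 1 * b 0
  | ⟨2, _⟩ => a 0 * b 2 + a 2 * b 0
  | ⟨3, _⟩ => a 0 * b 3 + a 3 * b 0 + a 1 * b 1
  | ⟨4, _⟩ => a 0 * b 4 + a 4 * b 0 + a 1 * b 2
  | ⟨5, _⟩ => a 0 * b 5 + a 5 * b 0 + a 2 * b 1
  | ⟨6, _⟩ => a 0 * b 6 + a 6 * b 0 + a 2 * b 2
  | ⟨7, _⟩ => a 0 * b 7 + a 7 * b 0 + a 1 * b 4 + a 1 * b 5 + a 2 * b 3 + a 3 * b 2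
      + a 4 * b 1 + a 5 * b 1
  | ⟨8, _⟩ => a 0 * b 8 + a 8 * b 0 + a 1 * b 6 + a 2 * b 4 + a 2 * b 5 + a 4 * b 2
      + a 5 * b 2 + a 6 * b 1
  | ⟨n + 9, h⟩ => absurd h (by omega)

def aone : CE9 := fun k =>
  match k with
  | ⟨0, _⟩ => 1
  | ⟨_ + 1, _⟩ => 0

lemma amul_assoc (a b c : CE9) : amul (amul a b) c = amul a (amul b c) := by
  funext k
  fin_cases k <;> (simp only [amul]; ring)

lemma aone_mul (a : CE9) : amul aone a = a := by
  funext k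
  fin_cases k <;> (simp only [amul, aone, one_mul, zero_mul, add_zero, zero_add]; rfl)

lemma amul_one (a : CE9) : amul a aone = a := by
  funext k
  fin_cases k <;> (simp only [amul, aone, mul_one, mul_zero, add_zero, zero_add]; rfl)

lemma amul_left_distrib (a b c : CE9) : amul a (b + c) = amul a b + amul a c := by
  funext k
  fin_cases k <;> (simp only [amul, add_apply]; ring)

lemma amul_right_distrib (a b c : CE9) : amul (a + b) c = amul a c + amul b c := by
  funext k
  fin_cases k <;> (simp only [amul, add_apply]; ring)

lemma azero_mul (a : CE9) : amul 0 a = 0 := by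
  have h : amul (0 + 0) a = amul 0 a + amul 0 a := amul_right_distrib 0 0 a
  rw [add_zero] at h
  exact (add_eq_left.mp h.symm)

lemma amul_zero (a : CE9) : amul a 0 = 0 := by
  have h : amul a (0 + 0) = amul a 0 + amul a 0 := amul_left_distrib a 0 0
  rw [add_zero] at h
  exact (add_eq_left.mp h.symm)

instance : Ring CE9 :=
  { (inferInstance : AddCommGroup CE9) with
    mul := amul
    one := aone
    mul_assoc := amul_assoc
    one_mul := aone_mul
    mul_one := amul_one
    left_distrib := amul_left_distrib
    right_distrib := amul_right_distrib
    zero_mul := azero_mul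
    mul_zero := amul_zero }

lemma mul_def (a b : CE9) : a * b = amul a b := rfl

def ex : CE9 := fun k =>
  match k with
  | ⟨1, _⟩ => 1
  | _ => 0

def ey : CE9 := fun k =>
  match k with
  | ⟨2, _⟩ => 1
  | _ => 0

def exy : CE9 := fun k =>
  match k with
  | ⟨4, _⟩ => 1
  | _ => 0

/-- Every element with vanishing `x` and `y` coordinates is central. -/
lemma central_of (a : CE9) (h1 : a 1 = 0) (h2 : a 2 = 0) : a ∈ Set.center CE9 := by
  rw [Semigroup.mem_center_iff]
  intro g
  funext k
  fin_cases k <;> (simp only [mul_def, amul, h1, h2, mul_zero, zero_mul, add_zero, zero_add]; ring)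

lemma exy_coord1 : exy 1 = 0 := rfl
lemma exy_coord2 : exy 2 = 0 := rfl

lemma mul_exy_coord1 (a : CE9) : (a * exy) 1 = 0 := by
  simp only [mul_def, amul, exy]; ring
lemma mul_exy_coord2 (a : CE9) : (a * exy) 2 = 0 := by
  simp only [mul_def, amul, exy]; ring
lemma mul_exy_coord7 (a : CE9) : (a * exy) 7 = a 1 := by
  simp only [mul_def, amul, exy, mul_zero, add_zero, zero_add]; exact mul_one (a 1)
lemma mul_exy_coord8 (a : CE9) : (a * exy) 8 = a 2 := by
  simp only [mul_def, amul, exy, mul_zero, add_zero, zero_add]; exact mul_one (a 2)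

lemma noncomm : IsNoncommutative CE9 := by
  intro h
  have h4 := congrFun (h ex ey) 4
  have : (1 : ZMod 2) = 0 := by
    calc (1 : ZMod 2) = (ex * ey) 4 := by simp only [mul_def, amul, ex, ey]; rfl
    _ = (ey * ex) 4 := h4
    _ = 0 := by simp only [mul_def, amul, ex, ey]; ring
  exact one_ne_zero this

lemma ce : IsCentrallyEssential CE9 := by
  intro a ha
  by_cases h : a 1 = 0 ∧ a 2 = 0
  · refine ⟨1, Set.one_mem_center, ?_, ?_⟩
    · rw [mul_one]; exact ha
    · rw [mul_one]; exact central_of a h.1 h.2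
  · refine ⟨exy, central_of exy exy_coord1 exy_coord2, ?_, ?_⟩
    · intro h0
      apply h
      constructor
      · have := mul_exy_coord7 a; rw [h0] at this; simpa using this.symm
      · have := mul_exy_coord8 a; rw [h0] at this; simpa using this.symm
    · exact central_of _ (mul_exy_coord1 a) (mul_exy_coord2 a)

lemma ex_mul_coord5 (s : CE9) : (ex * s) 5 = 0 := by
  simp only [mul_def, amul, ex]; ring
lemma ey_mul_ex_coord5 : (ey * ex) 5 = 1 := by
  simp only [mul_def, amul, ex, ey]; rfl

lemma nontwosided : HasNonTwoSidedRightIdeal CE9 := by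
  refine ⟨Submodule.span CE9ᵐᵒᵖ {ex}, fun h => ?_⟩
  have hx : ex ∈ Submodule.span CE9ᵐᵒᵖ {ex} := Submodule.mem_span_singleton_self ex
  have hyx := h ey ex hx
  rw [Submodule.mem_span_singleton] at hyx
  obtain ⟨r, hr⟩ := hyx
  have hsm : r • ex = ex * r.unop := rfl
  rw [hsm] at hr
  have h5 := congrFun hr 5
  rw [ex_mul_coord5, ey_mul_ex_coord5] at h5
  exact one_ne_zero h5.symm

end CE9

/-- There exists a noncommutative centrally essential ring containing a right ideal
that is not a two-sided ideal. -/
theorem stmt_18 : ∃ (A : Type) (inst : Ring A),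
    @IsNoncommutative A inst ∧ @IsCentrallyEssential A inst ∧
    @HasNonTwoSidedRightIdeal A inst := by
  exact ⟨CE9, inferInstance, CE9.noncomm, CE9.ce, CE9.nontwosided⟩
end
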